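/- Let B(t) be the analytic continuation of (1 - 2t - sqrt(1-4t))/(2t) to the slit plane C \ [1/4, infinity). For real u, the function t -> F_u(t) = B(1+B)(1+2B-B^2)/((1-B)(1+B-2B cos u)^2) is analytic on D' = C \ ([1/4, infinity) union (-infinity, -3/4]). In particular, in D', 1 - B(t) never vanishes and 1 + B(t) - 2 B(t) cos u never vanishes. -/

import Mathlib

/-!
Write `b = B t`. Squaring `1 - 2t(1 + b) = √(1 - 4t)` gives `t (1 + b)² = b` (at `t = 0` by
continuity), so if `b` is a real number `c ≠ -1` then `t = c / (1 + c)²` is real as well and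
`√(1 - 4t) = (1 - c) / (1 + c)`. The principal square root has nonnegative real part, so
`-1 < c ≤ 1`; since `t` avoids `1/4` and `(-∞, -3/4]`, this sharpens to `-1/3 < c < 1`.
Both `1 - b` and `1 + b - 2b cos u` can only vanish at real values `b = 1` and
`b = 1/(2 cos u - 1)`, which lie outside `(-1/3, 1)`.
-/

/-- The slit plane `D = ℂ \ [1/4, ∞)`. -/
def slitPlane14 : Set ℂ := {t : ℂ | ¬ (t.im = 0 ∧ 1/4 ≤ t.re)}

/-- The doubly-slit plane `D' = ℂ \ ([1/4,∞) ∪ (-∞,-3/4])`. -/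
def slitPlane14' : Set ℂ :=
  {t : ℂ | ¬ (t.im = 0 ∧ 1/4 ≤ t.re) ∧ ¬ (t.im = 0 ∧ t.re ≤ -3/4)}

open Set Complex

lemma isOpen_slitPlane14 : IsOpen slitPlane14 := by
  have : slitPlane14 = ({t : ℂ | t.im = 0} ∩ {t : ℂ | 1/4 ≤ t.re})ᶜ := by
    ext t; simp [slitPlane14]
  rw [this]
  exact ((isClosed_eq continuous_im continuous_const).inter
    (isClosed_le continuous_const continuous_re)).isOpen_compl

lemma zero_mem_slitPlane14 : (0 : ℂ) ∈ slitPlane14 := by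
  simp [slitPlane14]

lemma ofReal_mem_slitPlane14' {x : ℝ} : (x : ℂ) ∈ slitPlane14' ↔ -3/4 < x ∧ x < 1/4 := by
  simp [slitPlane14', and_comm]

lemma mul_one_add_sq_eq_of_eq_div {K : Type*} [Field K] [NeZero (2 : K)] {t s b : K}
    (ht : t ≠ 0) (hs : s ^ 2 = 1 - 4 * t) (hb : b = (1 - 2 * t - s) / (2 * t)) :
    t * (1 + b) ^ 2 = b := by
  have hs' : s = 1 - 2 * t * (1 + b) := by
    rw [hb]; field_simp; ring
  have h : (2 * t) ^ 2 * (t * (1 + b) ^ 2) = (2 * t) ^ 2 * b := by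
    rw [hs'] at hs
    linear_combination t * hs
  exact mul_left_cancel₀ (pow_ne_zero 2 (mul_ne_zero two_ne_zero ht)) h

lemma mem_Ioo_of_div_one_add_sq_mem_Ioo {c : ℝ} (hc : c ≠ -1) (hsign : 0 ≤ (1 - c) / (1 + c))
    (hlow : -3/4 < c / (1 + c) ^ 2) (hhigh : c / (1 + c) ^ 2 < 1/4) : c ∈ Ioo (-1/3) 1 := by
  obtain ⟨hle, hge⟩ := (div_nonneg_iff.1 hsign).resolve_right fun h => by linarith [h.1, h.2]
  have hsq : 0 < (1 + c) ^ 2 := pow_pos (lt_of_le_of_ne hge fun h => hc (by linarith)) 2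
  rw [lt_div_iff₀ hsq] at hlow
  rw [div_lt_iff₀ hsq] at hhigh
  constructor
  · nlinarith
  · exact lt_of_le_of_ne (by linarith) (by rintro rfl; norm_num at hhigh)

lemma one_add_sub_two_mul_mul_pos {c x : ℝ} (hc : c ∈ Ioo (-1/3) 1) (hx : x ∈ Icc (-1) 1) :
    0 < 1 + c - 2 * c * x := by
  obtain ⟨hc1, hc2⟩ := hc
  obtain ⟨hx1, hx2⟩ := hx
  rcases le_total 0 c with h | h <;> nlinarith

lemma eq_ofReal_of_one_add_sub_two_mul_mul_eq_zero {b : ℂ} {x : ℝ}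
    (h : 1 + b - 2 * b * x = 0) : b = ((2 * x - 1)⁻¹ : ℝ) := by
  have hx : (2 * x - 1 : ℂ) ≠ 0 := by
    intro h0; exact one_ne_zero (by linear_combination h + b * h0)
  push_cast
  field_simp
  linear_combination -h

section GeneratingFunction

variable {B : ℂ → ℂ}

lemma one_sub_two_mul_one_add_eq_cpow
    (hBeq : ∀ t ∈ slitPlane14, t ≠ 0 → B t = (1 - 2*t - (1 - 4*t) ^ ((1:ℂ)/2)) / (2*t))
    {t : ℂ} (ht : t ∈ slitPlane14) (ht0 : t ≠ 0) :
    1 - 2 * t * (1 + B t) = (1 - 4*t) ^ ((1:ℂ)/2) := by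
  rw [hBeq t ht ht0]; field_simp; ring

lemma mul_one_add_sq_eq_self (hB0 : ContinuousAt B 0)
    (hBeq : ∀ t ∈ slitPlane14, t ≠ 0 → B t = (1 - 2*t - (1 - 4*t) ^ ((1:ℂ)/2)) / (2*t))
    {t : ℂ} (ht : t ∈ slitPlane14) :
    t * (1 + B t) ^ 2 = B t := by
  have hpunct : ∀ z ∈ slitPlane14, z ≠ 0 → z * (1 + B z) ^ 2 = B z := fun z hz hz0 =>
    mul_one_add_sq_eq_of_eq_div hz0 (by rw [one_div, cpow_ofNat_inv_pow]) (hBeq z hz hz0)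
  rcases eq_or_ne t 0 with rfl | ht0
  · have hev : (fun z => z * (1 + B z) ^ 2) =ᶠ[nhdsWithin 0 {0}ᶜ] B := by
      filter_upwards [eventually_nhdsWithin_of_eventually_nhds
        (isOpen_slitPlane14.mem_nhds zero_mem_slitPlane14), self_mem_nhdsWithin] with z hz hz0
      exact hpunct z hz hz0
    have hcont : ContinuousAt (fun z => z * (1 + B z) ^ 2) 0 := by fun_prop
    exact ((hcont.eventuallyEq_nhds_iff_eventuallyEq_nhdsNE hB0).1 hev).eq_of_nhds
  · exact hpunct t ht ht0

lemma mem_Ioo_of_eq_ofReal (hB0 : ContinuousAt B 0)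
    (hBeq : ∀ t ∈ slitPlane14, t ≠ 0 → B t = (1 - 2*t - (1 - 4*t) ^ ((1:ℂ)/2)) / (2*t))
    {t : ℂ} (ht : t ∈ slitPlane14') {c : ℝ} (hc : B t = c) : c ∈ Ioo (-1/3) 1 := by
  have hquad := mul_one_add_sq_eq_self hB0 hBeq ht.1
  rw [hc] at hquad
  rcases eq_or_ne t 0 with rfl | ht0
  · have : c = 0 := by exact_mod_cast (by linear_combination -hquad : (c : ℂ) = 0)
    subst this; norm_num
  have hc1 : 1 + c ≠ 0 := by
    intro h
    obtain rfl : c = -1 := by linarith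
    norm_num at hquad
  have hc1' : (1 + c : ℂ) ≠ 0 := by exact_mod_cast hc1
  have htc : t = ((c / (1 + c) ^ 2 : ℝ) : ℂ) := by
    push_cast; field_simp; linear_combination hquad
  have hsqrt : 1 - 2 * t * (1 + B t) = (((1 - c) / (1 + c) : ℝ) : ℂ) := by
    rw [hc, htc]; push_cast; field_simp; ring
  have hsign : 0 ≤ (1 - c) / (1 + c) := by
    have hre : 0 ≤ ((1 - 4 * t) ^ ((1:ℂ)/2)).re := by
      rw [one_div, cpow_inv_two_re]; positivity
    rwa [← one_sub_two_mul_one_add_eq_cpow hBeq ht.1 ht0, hsqrt, ofReal_re] at hre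
  rw [htc, ofReal_mem_slitPlane14'] at ht
  exact mem_Ioo_of_div_one_add_sq_mem_Ioo (fun h => hc1 (by linarith)) hsign ht.1 ht.2

end GeneratingFunction

/-- Let `B` be the analytic continuation of `(1-2t-√(1-4t))/(2t)` to `D = ℂ \ [1/4,∞)`.
For each real `u`, the function `F_u(t) = B(1+B)(1+2B-B²)/((1-B)(1+B-2B cos u)²)` is
analytic on `D' = ℂ \ ([1/4,∞) ∪ (-∞,-3/4])`; in particular `1 - B(t)` and
`1 + B(t) - 2 B(t) cos u` never vanish on `D'`. -/
theorem Fu_analytic_on_slit_plane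
    (B : ℂ → ℂ) (hB : AnalyticOnNhd ℂ B slitPlane14)
    (hBeq : ∀ t ∈ slitPlane14, t ≠ 0 →
      B t = (1 - 2*t - (1 - 4*t) ^ ((1:ℂ)/2)) / (2*t))
    (u : ℝ) :
    AnalyticOnNhd ℂ
      (fun t => B t * (1 + B t) * (1 + 2*B t - (B t)^2) /
        ((1 - B t) * (1 + B t - 2 * B t * Real.cos u)^2)) slitPlane14' ∧
    ∀ t ∈ slitPlane14', 1 - B t ≠ 0 ∧ 1 + B t - 2 * B t * Real.cos u ≠ 0 := by
  have hrange {t : ℂ} (ht : t ∈ slitPlane14') {c : ℝ} (hc : B t = c) : c ∈ Ioo (-1/3) 1 :=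
    mem_Ioo_of_eq_ofReal (hB 0 zero_mem_slitPlane14).continuousAt hBeq ht hc
  have hne : ∀ t ∈ slitPlane14', 1 - B t ≠ 0 ∧ 1 + B t - 2 * B t * Real.cos u ≠ 0 := by
    refine fun t ht => ⟨fun h => ?_, fun h => ?_⟩
    · simpa using hrange ht (c := 1) (by push_cast; linear_combination -h)
    · have hc := eq_ofReal_of_one_add_sub_two_mul_mul_eq_zero h
      have hpos := one_add_sub_two_mul_mul_pos (hrange ht hc)
        ⟨Real.neg_one_le_cos u, Real.cos_le_one u⟩
      rw [hc] at h
      exact hpos.ne' (by exact_mod_cast h)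
  refine ⟨fun t ht => ?_, hne⟩
  have hBt := hB t ht.1
  exact AnalyticAt.div (by fun_prop) (by fun_prop)
    (mul_ne_zero (hne t ht).1 (pow_ne_zero 2 (hne t ht).2))
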